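/- arXiv:2510.22790 — 2 statements merged into one kernel-verified Lean document; each statement's English description precedes it below -/
import Mathlib

section
/- Let E(P) = {x : xᵀPx ≤ 1} with P symmetric positive definite, and consider the closed-loop linear system ẋ = (A+BK)x + Ed with disturbances ‖d‖₂ ≤ 1. If xᵀP((A+BK)x + Ed) ≤ 0 for all x with xᵀPx = 1 and all d with ‖d‖₂ ≤ 1, then any absolutely continuous solution x(t) of the differential inclusion with x(0) ∈ E(P) satisfies x(t) ∈ E(P) for all t ≥ 0. -/
/-!
Along a solution, `V t = x(t)ᵀ P x(t)` is a sum of products of primitives of integrable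
functions, hence absolutely continuous, so `V t - V s = ∫ₛᵗ V'`. By homogeneity the boundary
condition extends to the exterior of the ellipsoid: with `M = A + BK`, `x = r y`, `yᵀPy = 1` and
`r ≥ 1`, `xᵀP(Mx + Ed) = r ((r - 1) yᵀPMy + yᵀP(My + Ed))`, where `yᵀPMy ≤ 0` is the case
`d = 0`. Hence `V' = 2 xᵀP(Mx + Ed) ≤ 0` a.e. wherever `V > 1`, and integrating from the last
time `V ≤ 1` shows that `V` never exceeds `1`.
-/

open Matrix MeasureTheory

open Set Filter

namespace AbsolutelyContinuousOnInterval

variable {a b : ℝ}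

theorem congr {X : Type*} [PseudoMetricSpace X] {f g : ℝ → X}
    (hf : AbsolutelyContinuousOnInterval f a b) (hfg : EqOn f g (uIcc a b)) :
    AbsolutelyContinuousOnInterval g a b := by
  refine Tendsto.congr' ?_ hf
  filter_upwards [eventually_inf_principal.mpr (Eventually.of_forall fun _ h => h)] with E hE
  exact Finset.sum_congr rfl fun i hi => by rw [hfg (hE.1 i hi).1, hfg (hE.1 i hi).2]

theorem fun_sum {F ι : Type*} [SeminormedAddCommGroup F] (s : Finset ι) {f : ι → ℝ → F}
    (hf : ∀ i ∈ s, AbsolutelyContinuousOnInterval (f i) a b) :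
    AbsolutelyContinuousOnInterval (fun t => ∑ i ∈ s, f i t) a b := by
  classical
  induction s using Finset.induction_on with
  | empty =>
    simpa using (LipschitzWith.const (0 : F)).lipschitzOnWith.absolutelyContinuousOnInterval
      (a := a) (b := b)
  | insert i s hi ih =>
    simp only [Finset.sum_insert hi]
    exact (hf i (Finset.mem_insert_self i s)).fun_add
      (ih fun j hj => hf j (Finset.mem_insert_of_mem hj))

theorem le_of_ae_deriv_nonpos {g : ℝ → ℝ} {c : ℝ} (hab : a ≤ b)
    (hg : AbsolutelyContinuousOnInterval g a b) (ha : g a ≤ c)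
    (hg' : ∀ᵐ τ, τ ∈ Ioc a b → c < g τ → deriv g τ ≤ 0) : g b ≤ c := by
  by_contra! hb
  set S := Icc a b ∩ g ⁻¹' Iic c
  have hS : IsClosed S := by
    have := hg.continuousOn
    rw [uIcc_of_le hab] at this
    exact this.preimage_isClosed_of_isClosed isClosed_Icc isClosed_Iic
  have hSbdd : BddAbove S := bddAbove_Icc.mono inter_subset_left
  set s := sSup S
  obtain ⟨⟨has, hsb⟩, hgs⟩ : s ∈ S := hS.csSup_mem ⟨a, ⟨left_mem_Icc.2 hab, ha⟩⟩ hSbdd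
  have hsb' : s < b := hsb.lt_of_ne fun h => by rw [h] at hgs; exact hgs.not_gt hb
  have habove : ∀ τ ∈ Ioc s b, c < g τ := fun τ hτ => by
    by_contra! h
    exact hτ.1.not_ge (le_csSup hSbdd ⟨⟨has.trans hτ.1.le, hτ.2⟩, h⟩)
  have hint : ∫ τ in s..b, deriv g τ ≤ 0 := by
    rw [intervalIntegral.integral_of_le hsb]
    refine integral_nonpos_of_ae ?_
    filter_upwards [ae_restrict_mem measurableSet_Ioc, ae_restrict_of_ae hg'] with τ hτ hτ'
    exact hτ' ⟨has.trans_lt hτ.1, hτ.2⟩ (habove τ hτ)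
  have hftc := (hg.mono (by
    rw [uIcc_of_le hsb, uIcc_of_le hab]; exact Icc_subset_Icc_left has)).integral_deriv_eq_sub
  linarith [show g s ≤ c from hgs]

end AbsolutelyContinuousOnInterval

namespace IntervalIntegrable

variable {a b c : ℝ}

theorem absolutelyContinuousOnInterval_clm_comp {F : Type*} [NormedAddCommGroup F]
    [NormedSpace ℝ F] [CompleteSpace F] {v x : ℝ → F} (hv : IntervalIntegrable v volume a b)
    (hc : c ∈ uIcc a b) (hx : ∀ τ ∈ uIcc a b, x τ = x c + ∫ t in c..τ, v t) (L : F →L[ℝ] ℝ) :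
    AbsolutelyContinuousOnInterval (fun τ => L (x τ)) a b := by
  have hLv : IntervalIntegrable (fun t => L (v t)) volume a b :=
    ⟨L.integrable_comp hv.1, L.integrable_comp hv.2⟩
  refine ((LipschitzWith.const (L (x c))).lipschitzOnWith.absolutelyContinuousOnInterval.fun_add
    (hLv.absolutelyContinuousOnInterval_intervalIntegral hc)).congr fun τ hτ => ?_
  rw [hx τ hτ, map_add, ← L.intervalIntegral_comp_comm (hv.mono_set (uIcc_subset_uIcc hc hτ))]

theorem absolutelyContinuousOnInterval_dotProduct_mulVec {ι : Type*} [Fintype ι]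
    {v x : ℝ → ι → ℝ} (hv : IntervalIntegrable v volume a b) (hc : c ∈ uIcc a b)
    (hx : ∀ τ ∈ uIcc a b, x τ = x c + ∫ t in c..τ, v t) (P : Matrix ι ι ℝ) :
    AbsolutelyContinuousOnInterval (fun τ => x τ ⬝ᵥ P *ᵥ x τ) a b := by
  have hlin (L : (ι → ℝ) →L[ℝ] ℝ) := hv.absolutelyContinuousOnInterval_clm_comp hc hx L
  exact AbsolutelyContinuousOnInterval.fun_sum _ fun i _ =>
    (hlin (ContinuousLinearMap.proj i)).fun_mul
      (hlin ((ContinuousLinearMap.proj i).comp P.mulVecLin.toContinuousLinearMap))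

end IntervalIntegrable

theorem HasDerivAt.dotProduct {ι : Type*} [Fintype ι] {f g : ℝ → ι → ℝ} {f' g' : ι → ℝ} {τ : ℝ}
    (hf : HasDerivAt f f' τ) (hg : HasDerivAt g g' τ) :
    HasDerivAt (fun t => f t ⬝ᵥ g t) (f' ⬝ᵥ g τ + f τ ⬝ᵥ g') τ :=
  (HasDerivAt.fun_sum (u := Finset.univ) fun i _ =>
    (hasDerivAt_pi.1 hf i).fun_mul (hasDerivAt_pi.1 hg i)).congr_deriv Finset.sum_add_distrib

theorem HasDerivAt.dotProduct_mulVec {ι : Type*} [Fintype ι] {x : ℝ → ι → ℝ} {x' : ι → ℝ}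
    {τ : ℝ} (hx : HasDerivAt x x' τ) (P : Matrix ι ι ℝ) :
    HasDerivAt (fun t => x t ⬝ᵥ P *ᵥ x t) (x' ⬝ᵥ P *ᵥ x τ + x τ ⬝ᵥ P *ᵥ x') τ :=
  hx.dotProduct ((P.mulVecLin.toContinuousLinearMap).hasFDerivAt.comp_hasDerivAt τ hx)

theorem dotProduct_mulVec_add_nonpos_of_one_le {ι κ : Type*} [Fintype ι] [Fintype κ]
    {P M : Matrix ι ι ℝ} {E : Matrix ι κ ℝ}
    (h : ∀ x : ι → ℝ, x ⬝ᵥ P *ᵥ x = 1 → ∀ d : κ → ℝ, d ⬝ᵥ d ≤ 1 →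
      x ⬝ᵥ P *ᵥ (M *ᵥ x + E *ᵥ d) ≤ 0)
    {z : ι → ℝ} (hz : 1 ≤ z ⬝ᵥ P *ᵥ z) {d : κ → ℝ} (hd : d ⬝ᵥ d ≤ 1) :
    z ⬝ᵥ P *ᵥ (M *ᵥ z + E *ᵥ d) ≤ 0 := by
  set r := √(z ⬝ᵥ P *ᵥ z)
  have hr : 1 ≤ r := Real.one_le_sqrt.2 hz
  have hr2 : r * r = z ⬝ᵥ P *ᵥ z := Real.mul_self_sqrt (zero_le_one.trans hz)
  set y := r⁻¹ • z
  have hzy : z = r • y := by simp [y, smul_smul, (zero_lt_one.trans_le hr).ne']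
  have hy : y ⬝ᵥ P *ᵥ y = 1 := by
    rw [hzy, mulVec_smul, dotProduct_smul, smul_dotProduct] at hr2
    simp only [smul_eq_mul, ← mul_assoc] at hr2
    exact (mul_eq_left₀ (by positivity)).1 hr2.symm
  have hdrift : y ⬝ᵥ P *ᵥ (M *ᵥ y) ≤ 0 := by simpa using h y hy 0 (by simp)
  calc z ⬝ᵥ P *ᵥ (M *ᵥ z + E *ᵥ d)
      = r * ((r - 1) * (y ⬝ᵥ P *ᵥ (M *ᵥ y)) + y ⬝ᵥ P *ᵥ (M *ᵥ y + E *ᵥ d)) := by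
        rw [hzy]
        simp only [mulVec_add, mulVec_smul, dotProduct_add, dotProduct_smul, smul_dotProduct,
          smul_eq_mul]
        ring
    _ ≤ 0 := mul_nonpos_of_nonneg_of_nonpos (by linarith)
        (add_nonpos (mul_nonpos_of_nonneg_of_nonpos (by linarith) hdrift) (h y hy d hd))

theorem ellipsoid_forward_invariance_general {n m p : ℕ}
    (A : Matrix (Fin n) (Fin n) ℝ) (B : Matrix (Fin n) (Fin m) ℝ)
    (E : Matrix (Fin n) (Fin p) ℝ) (K : Matrix (Fin m) (Fin n) ℝ)
    (P : Matrix (Fin n) (Fin n) ℝ) (hP : P.PosDef)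
    (hinv : ∀ x : Fin n → ℝ, x ⬝ᵥ P.mulVec x = 1 →
      ∀ d : Fin p → ℝ, d ⬝ᵥ d ≤ 1 →
        x ⬝ᵥ P.mulVec ((A + B * K).mulVec x + E.mulVec d) ≤ 0)
    -- an absolutely continuous solution: x is the integral of a locally
    -- integrable velocity v, which a.e. satisfies the closed-loop dynamics
    -- for some measurable disturbance d with ‖d(t)‖₂ ≤ 1
    (x : ℝ → (Fin n → ℝ)) (v : ℝ → (Fin n → ℝ)) (d : ℝ → (Fin p → ℝ))
    (hd_bnd : ∀ t, (d t) ⬝ᵥ (d t) ≤ 1)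
    (hv_int : ∀ t : ℝ, IntervalIntegrable v volume 0 t)
    (hsol : ∀ t : ℝ, x t = x 0 + ∫ s in (0 : ℝ)..t, v s)
    (hdyn : ∀ᵐ t : ℝ, v t = (A + B * K).mulVec (x t) + E.mulVec (d t))
    (hx0 : (x 0) ⬝ᵥ P.mulVec (x 0) ≤ 1) :
    ∀ t ≥ (0 : ℝ), (x t) ⬝ᵥ P.mulVec (x t) ≤ 1 := by
  intro t ht
  have hcomm (u w : Fin n → ℝ) : u ⬝ᵥ P *ᵥ w = w ⬝ᵥ P *ᵥ u := by
    rw [dotProduct_mulVec, ← mulVec_transpose, (isHermitian_iff_isSymm.1 hP.1).eq,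
      dotProduct_comm]
  have hVac := (hv_int t).absolutelyContinuousOnInterval_dotProduct_mulVec left_mem_uIcc
    (fun τ _ => hsol τ) P
  refine hVac.le_of_ae_deriv_nonpos ht hx0 ?_
  filter_upwards [(hv_int t).ae_hasDerivAt_integral, hdyn] with τ hprim hvτ hτ hVτ
  have hxτ : HasDerivAt x (v τ) τ := by
    rw [funext hsol]
    exact (hprim (mem_uIcc_of_le hτ.1.le hτ.2) 0 left_mem_uIcc).const_add (x 0)
  rw [(hxτ.dotProduct_mulVec P).deriv, hcomm (v τ), hvτ]
  linarith [dotProduct_mulVec_add_nonpos_of_one_le hinv hVτ.le (hd_bnd τ)]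

/-- If xᵀP((A+BK)x + Ed) ≤ 0 on the boundary of the ellipsoid E(P) for all
admissible disturbances, then E(P) is forward invariant for absolutely
continuous solutions of the closed-loop differential inclusion. -/
theorem ellipsoid_forward_invariance {n m p : ℕ}
    (A : Matrix (Fin n) (Fin n) ℝ) (B : Matrix (Fin n) (Fin m) ℝ)
    (E : Matrix (Fin n) (Fin p) ℝ) (K : Matrix (Fin m) (Fin n) ℝ)
    (P : Matrix (Fin n) (Fin n) ℝ) (hP : P.PosDef)
    (hinv : ∀ x : Fin n → ℝ, x ⬝ᵥ P.mulVec x = 1 →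
      ∀ d : Fin p → ℝ, d ⬝ᵥ d ≤ 1 →
        x ⬝ᵥ P.mulVec ((A + B * K).mulVec x + E.mulVec d) ≤ 0)
    -- an absolutely continuous solution: x is the integral of a locally
    -- integrable velocity v, which a.e. satisfies the closed-loop dynamics
    -- for some measurable disturbance d with ‖d(t)‖₂ ≤ 1
    (x : ℝ → (Fin n → ℝ)) (v : ℝ → (Fin n → ℝ)) (d : ℝ → (Fin p → ℝ))
    (hd_meas : Measurable d) (hd_bnd : ∀ t, (d t) ⬝ᵥ (d t) ≤ 1)
    (hv_int : ∀ t : ℝ, IntervalIntegrable v volume 0 t)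
    (hsol : ∀ t : ℝ, x t = x 0 + ∫ s in (0 : ℝ)..t, v s)
    (hdyn : ∀ᵐ t : ℝ, v t = (A + B * K).mulVec (x t) + E.mulVec (d t))
    (hx0 : (x 0) ⬝ᵥ P.mulVec (x 0) ≤ 1) :
    ∀ t ≥ (0 : ℝ), (x t) ⬝ᵥ P.mulVec (x t) ≤ 1 :=
  ellipsoid_forward_invariance_general A B E K P hP hinv x v d hd_bnd hv_int hsol hdyn hx0
end

section
/- Let P be symmetric positive definite with inverse Q, let Y ∈ ℝ^{m×n}, and set K = YQ⁻¹ = YP. If the block matrix [[AQ + QAᵀ + BY + YᵀBᵀ + λQ, E], [Eᵀ, −λI]] is negative semidefinite for some λ > 0, then for all x ∈ ℝⁿ with xᵀPx = 1 and all d with ‖d‖₂ ≤ 1, xᵀP((A+BK)x + Ed) ≤ 0. -/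
/-!
Congruence of the top-left block by `P` (i.e. of the whole LMI by `diag(P, I)`) turns it into
`P Acl + Aclᵀ P + λ P` with `Acl = A + B K`. Evaluating the LMI at `(P x, d)` therefore gives
`2 xᵀP(Acl x + E d) + λ xᵀP x ≤ λ dᵀd`, and on `xᵀP x = 1`, `dᵀd ≤ 1` the right side is at most `λ`.
-/

open Matrix

namespace Matrix

variable {ι κ R : Type*} [Fintype ι] [Fintype κ] [CommRing R]

theorem sumElim_dotProduct_fromBlocks_mulVec (A : Matrix ι ι R) (B : Matrix ι κ R)
    (C : Matrix κ ι R) (D : Matrix κ κ R) (u : ι → R) (v : κ → R) :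
    Sum.elim u v ⬝ᵥ fromBlocks A B C D *ᵥ Sum.elim u v =
      u ⬝ᵥ A *ᵥ u + u ⬝ᵥ B *ᵥ v + (v ⬝ᵥ C *ᵥ u + v ⬝ᵥ D *ᵥ v) := by
  rw [fromBlocks_mulVec, Sum.elim_comp_inl, Sum.elim_comp_inr, sumElim_dotProduct_sumElim,
    dotProduct_add, dotProduct_add]

theorem mulVec_dotProduct_mulVec_mulVec (P : Matrix κ ι R) (S : Matrix κ κ R) (x : ι → R) :
    P *ᵥ x ⬝ᵥ S *ᵥ (P *ᵥ x) = x ⬝ᵥ (Pᵀ * S * P) *ᵥ x := by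
  rw [Matrix.mul_assoc, ← mulVec_mulVec, dotProduct_transpose_mulVec, ← mulVec_mulVec,
    dotProduct_comm]

theorem dotProduct_add_transpose_mulVec_self (M : Matrix ι ι R) (x : ι → R) :
    x ⬝ᵥ (M + Mᵀ) *ᵥ x = 2 * (x ⬝ᵥ M *ᵥ x) := by
  rw [add_mulVec, dotProduct_add, dotProduct_transpose_mulVec, two_mul]

end Matrix

section LMI

variable {ι κ ρ : Type*} [Fintype ι] [Fintype κ] [Fintype ρ] [DecidableEq ι] [DecidableEq κ]
variable {A P Q : Matrix ι ι ℝ} {B : Matrix ι ρ ℝ} {Y K : Matrix ρ ι ℝ} {E : Matrix ι κ ℝ}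
  {lam : ℝ}

theorem lmi_block_congruence (hPQ : P * Q = 1) (hQP : Q * P = 1) (hPt : Pᵀ = P) (hK : K = Y * P) :
    Pᵀ * (A * Q + Q * Aᵀ + B * Y + Yᵀ * Bᵀ + lam • Q) * P =
      P * (A + B * K) + (P * (A + B * K))ᵀ + lam • P := by
  have hQP' (X : Matrix ι ι ℝ) : X * Q * P = X := by rw [Matrix.mul_assoc, hQP, Matrix.mul_one]
  subst hK
  simp only [hPt, Matrix.mul_add, Matrix.add_mul, ← Matrix.mul_assoc, transpose_add,
    transpose_mul, Matrix.mul_smul, Matrix.smul_mul, hQP', hPQ, Matrix.one_mul]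
  abel

theorem two_mul_dotProduct_closedLoop_le_of_lmi (hPQ : P * Q = 1) (hQP : Q * P = 1)
    (hPt : Pᵀ = P) (hK : K = Y * P)
    (hLMI : (-(fromBlocks (A * Q + Q * Aᵀ + B * Y + Yᵀ * Bᵀ + lam • Q) E
      Eᵀ (-(lam • (1 : Matrix κ κ ℝ))))).PosSemidef) (x : ι → ℝ) (d : κ → ℝ) :
    2 * (x ⬝ᵥ P *ᵥ ((A + B * K) *ᵥ x + E *ᵥ d)) + lam * (x ⬝ᵥ P *ᵥ x) ≤ lam * (d ⬝ᵥ d) := by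
  have hz := hLMI.dotProduct_mulVec_nonneg (Sum.elim (P *ᵥ x) d)
  rw [star_trivial, neg_mulVec, dotProduct_neg, sumElim_dotProduct_fromBlocks_mulVec,
    mulVec_dotProduct_mulVec_mulVec, lmi_block_congruence hPQ hQP hPt hK] at hz
  have hstate : x ⬝ᵥ (P * (A + B * K) + (P * (A + B * K))ᵀ + lam • P) *ᵥ x =
      2 * (x ⬝ᵥ P *ᵥ ((A + B * K) *ᵥ x)) + lam * (x ⬝ᵥ P *ᵥ x) := by
    rw [add_mulVec, dotProduct_add, dotProduct_add_transpose_mulVec_self, mulVec_mulVec,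
      smul_mulVec, dotProduct_smul, smul_eq_mul]
  have hcross : P *ᵥ x ⬝ᵥ E *ᵥ d = x ⬝ᵥ P *ᵥ (E *ᵥ d) := by
    rw [dotProduct_comm, ← dotProduct_transpose_mulVec, hPt]
  have hcross' : d ⬝ᵥ Eᵀ *ᵥ (P *ᵥ x) = x ⬝ᵥ P *ᵥ (E *ᵥ d) := by
    rw [dotProduct_transpose_mulVec, hcross]
  have hdist : d ⬝ᵥ (-(lam • (1 : Matrix κ κ ℝ))) *ᵥ d = -(lam * (d ⬝ᵥ d)) := by
    rw [neg_mulVec, smul_mulVec, one_mulVec, dotProduct_neg, dotProduct_smul, smul_eq_mul]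
  rw [hstate, hcross, hcross', hdist] at hz
  rw [mulVec_add, dotProduct_add]
  linarith

end LMI

/-- If the LMI [[AQ+QAᵀ+BY+YᵀBᵀ+λQ, E],[Eᵀ, −λI]] ⪯ 0 holds with Q = P⁻¹ and
K = YP, then the Nagumo invariance condition holds on the ellipsoid boundary. -/
theorem lmi_implies_invariance_condition {n m p : ℕ}
    (A : Matrix (Fin n) (Fin n) ℝ) (B : Matrix (Fin n) (Fin m) ℝ)
    (E : Matrix (Fin n) (Fin p) ℝ)
    (P Q : Matrix (Fin n) (Fin n) ℝ) (Y : Matrix (Fin m) (Fin n) ℝ)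
    (hP : P.PosDef) (hQ : Q = P⁻¹) (K : Matrix (Fin m) (Fin n) ℝ)
    (hK : K = Y * P) (lam : ℝ) (hlam : 0 < lam)
    (hLMI : (-(Matrix.fromBlocks
        (A * Q + Q * Aᵀ + B * Y + Yᵀ * Bᵀ + lam • Q) E
        Eᵀ (-(lam • (1 : Matrix (Fin p) (Fin p) ℝ))))).PosSemidef) :
    ∀ x : Fin n → ℝ, x ⬝ᵥ P.mulVec x = 1 →
      ∀ d : Fin p → ℝ, d ⬝ᵥ d ≤ 1 →
        x ⬝ᵥ P.mulVec ((A + B * K).mulVec x + E.mulVec d) ≤ 0 := by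
  intro x hx d hd
  have hdet : IsUnit P.det := (isUnit_iff_isUnit_det P).mp hP.isUnit
  have hPQ : P * Q = 1 := hQ ▸ mul_nonsing_inv P hdet
  have hQP : Q * P = 1 := hQ ▸ nonsing_inv_mul P hdet
  have h := two_mul_dotProduct_closedLoop_le_of_lmi hPQ hQP hP.1 hK hLMI x d
  rw [hx] at h
  linarith [mul_le_mul_of_nonneg_left hd hlam.le]
end
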